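/- Let S₁ < S₂ be symmetric n×n matrices with U = S₂ − S₁ positive definite, and let 𝒮ᵢ = {(h, Sᵢh)} be their graph Lagrangians in (ℝ²ⁿ, ω). Then the cone C(𝒮₁, 𝒮₂) = {(h, Sh) : S symmetric, S₁ ≤ S ≤ S₂, h ∈ ℝⁿ} equals {v ∈ ℝ²ⁿ : Sg(v) ≥ 0}, where Sg(v) = ω(v₁, v₂) for the (unique) decomposition v = v₁ + v₂ with vᵢ ∈ 𝒮ᵢ. -/

import Mathlib

open Matrix

/-- The standard symplectic form on ℝ²ⁿ = ℝⁿ × ℝⁿ. -/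
def omegaForm {n : ℕ} (u v : (Fin n → ℝ) × (Fin n → ℝ)) : ℝ :=
  v.2 ⬝ᵥ u.1 - u.2 ⬝ᵥ v.1

/-- The cone C(𝒮₁, 𝒮₂) between the graph Lagrangians of S₁ ≤ S₂. -/
def coneBetween {n : ℕ} (S₁ S₂ : Matrix (Fin n) (Fin n) ℝ) :
    Set ((Fin n → ℝ) × (Fin n → ℝ)) :=
  {v | ∃ S : Matrix (Fin n) (Fin n) ℝ, S.IsSymm ∧ (S - S₁).PosSemidef ∧
    (S₂ - S).PosSemidef ∧ v.2 = S *ᵥ v.1}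

/-! Write `v = (x₁, S₁ x₁) + (x₂, S₂ x₂)` and `U = S₂ - S₁`. Then `Sg v = ⟨x₁, U x₂⟩`, and `v` lies
on the graph of `S₁ + A` iff `A (x₁ + x₂) = U x₂`. So the theorem says that some `0 ≤ A ≤ U` maps
`x₁ + x₂` to `U x₂` iff `⟨x₁, U x₂⟩ ≥ 0`. Necessity: `⟨x₁, U x₂⟩ = ⟨x₁, A x₁⟩ + ⟨x₂, (U - A) x₂⟩`.
Sufficiency: take the rank-one `A = w wᵀ / ⟨w, x₁ + x₂⟩` with `w = U x₂`; it lies below `U` by the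
Cauchy–Schwarz inequality for the form of `U`. -/

namespace Matrix

variable {ι : Type*}

lemma PosSemidef.isSymm {M : Matrix ι ι ℝ} (hM : M.PosSemidef) : M.IsSymm :=
  isHermitian_iff_isSymm.1 hM.isHermitian

variable [Fintype ι]

lemma IsSymm.dotProduct_mulVec_comm {M : Matrix ι ι ℝ} (hM : M.IsSymm) (x y : ι → ℝ) :
    x ⬝ᵥ (M *ᵥ y) = y ⬝ᵥ (M *ᵥ x) := by
  rw [dotProduct_mulVec, ← mulVec_transpose, hM.eq, dotProduct_comm]

lemma PosSemidef.dotProduct_mulVec_self_nonneg {M : Matrix ι ι ℝ} (hM : M.PosSemidef)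
    (x : ι → ℝ) : 0 ≤ x ⬝ᵥ (M *ᵥ x) := by
  simpa using hM.dotProduct_mulVec_nonneg x

lemma PosSemidef.sq_dotProduct_mulVec_le {M : Matrix ι ι ℝ} (hM : M.PosSemidef) (x y : ι → ℝ) :
    (x ⬝ᵥ (M *ᵥ y)) ^ 2 ≤ (x ⬝ᵥ (M *ᵥ x)) * (y ⬝ᵥ (M *ᵥ y)) := by
  have hquad : ∀ t : ℝ,
      0 ≤ (x ⬝ᵥ (M *ᵥ x)) * (t * t) + 2 * (x ⬝ᵥ (M *ᵥ y)) * t + y ⬝ᵥ (M *ᵥ y) := by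
    intro t
    have := hM.dotProduct_mulVec_self_nonneg (t • x + y)
    simp only [mulVec_add, mulVec_smul, dotProduct_add, add_dotProduct, dotProduct_smul,
      smul_dotProduct, smul_eq_mul, hM.isSymm.dotProduct_mulVec_comm y x] at this
    linarith
  have := discrim_le_zero hquad
  rw [discrim] at this
  linarith

lemma dotProduct_mulVec_nonneg_of_mulVec_add_eq {U A : Matrix ι ι ℝ} (hA : A.PosSemidef)
    (hUA : (U - A).PosSemidef) {x₁ x₂ : ι → ℝ} (hx : A *ᵥ (x₁ + x₂) = U *ᵥ x₂) :
    0 ≤ x₁ ⬝ᵥ (U *ᵥ x₂) := by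
  have hAx₁ : A *ᵥ x₁ = (U - A) *ᵥ x₂ := by
    rw [sub_mulVec, ← hx, mulVec_add]
    abel
  calc 0 ≤ x₁ ⬝ᵥ (A *ᵥ x₁) + x₂ ⬝ᵥ ((U - A) *ᵥ x₂) :=
        add_nonneg (hA.dotProduct_mulVec_self_nonneg x₁) (hUA.dotProduct_mulVec_self_nonneg x₂)
    _ = x₁ ⬝ᵥ (A *ᵥ (x₁ + x₂)) := by
        rw [mulVec_add, dotProduct_add, ← hAx₁, hA.isSymm.dotProduct_mulVec_comm x₁ x₂]
    _ = x₁ ⬝ᵥ (U *ᵥ x₂) := by rw [hx]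

lemma exists_posSemidef_mulVec_add_eq {U : Matrix ι ι ℝ} (hU : U.PosSemidef)
    {x₁ x₂ : ι → ℝ} (h : 0 ≤ x₁ ⬝ᵥ (U *ᵥ x₂)) :
    ∃ A : Matrix ι ι ℝ, A.PosSemidef ∧ (U - A).PosSemidef ∧ A *ᵥ (x₁ + x₂) = U *ᵥ x₂ := by
  set w := U *ᵥ x₂
  set t := w ⬝ᵥ (x₁ + x₂) with ht_def
  have hw : ∀ x, w ⬝ᵥ x = x₂ ⬝ᵥ (U *ᵥ x) := fun x => by
    rw [dotProduct_comm, hU.isSymm.dotProduct_mulVec_comm]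
  have hx₂t : x₂ ⬝ᵥ (U *ᵥ x₂) ≤ t := by
    rw [ht_def, hw, mulVec_add, dotProduct_add, ← hU.isSymm.dotProduct_mulVec_comm x₁ x₂]
    linarith
  have ht : 0 ≤ t := (hU.dotProduct_mulVec_self_nonneg x₂).trans hx₂t
  have hCS : ∀ x, (w ⬝ᵥ x) ^ 2 ≤ t * (x ⬝ᵥ (U *ᵥ x)) := fun x =>
    calc (w ⬝ᵥ x) ^ 2 = (x₂ ⬝ᵥ (U *ᵥ x)) ^ 2 := by rw [hw]
      _ ≤ (x₂ ⬝ᵥ (U *ᵥ x₂)) * (x ⬝ᵥ (U *ᵥ x)) := hU.sq_dotProduct_mulVec_le x₂ x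
      _ ≤ t * (x ⬝ᵥ (U *ᵥ x)) :=
        mul_le_mul_of_nonneg_right hx₂t (hU.dotProduct_mulVec_self_nonneg x)
  set A := t⁻¹ • vecMulVec w w
  have hA : A.PosSemidef := by
    simpa using (posSemidef_vecMulVec_self_star w).smul (inv_nonneg.2 ht)
  have hAx : ∀ x, A *ᵥ x = (t⁻¹ * (w ⬝ᵥ x)) • w := fun x => by
    rw [smul_mulVec, vecMulVec_mulVec, op_smul_eq_smul, smul_smul]
  refine ⟨A, hA, ?_, ?_⟩
  · refine .of_dotProduct_mulVec_nonneg (hU.isHermitian.sub hA.isHermitian) fun x => ?_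
    have hAxx : x ⬝ᵥ (A *ᵥ x) = t⁻¹ * (w ⬝ᵥ x) ^ 2 := by
      rw [hAx, dotProduct_smul, smul_eq_mul, dotProduct_comm x w]
      ring
    rw [star_trivial, sub_mulVec, dotProduct_sub, hAxx, sub_nonneg]
    rcases ht.eq_or_lt with ht0 | htpos
    · simpa [← ht0] using hU.dotProduct_mulVec_self_nonneg x
    · rw [inv_mul_le_iff₀ htpos]
      exact hCS x
  · rw [hAx]
    -- if `t = 0` then `A = 0` (as `0⁻¹ = 0`), and Cauchy–Schwarz forces `w = 0`
    rcases ht.eq_or_lt with ht0 | htpos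
    · have : w ⬝ᵥ w = 0 := by simpa [← ht0] using hCS w
      simp [dotProduct_self_eq_zero.1 this]
    · rw [inv_mul_cancel₀ htpos.ne', one_smul]

end Matrix

lemma omegaForm_graph {n : ℕ} {S₁ : Matrix (Fin n) (Fin n) ℝ} (hS₁ : S₁.IsSymm)
    (S₂ : Matrix (Fin n) (Fin n) ℝ) (x₁ x₂ : Fin n → ℝ) :
    omegaForm (x₁, S₁ *ᵥ x₁) (x₂, S₂ *ᵥ x₂) = x₁ ⬝ᵥ ((S₂ - S₁) *ᵥ x₂) := by
  rw [omegaForm, sub_mulVec, dotProduct_sub, dotProduct_comm (S₂ *ᵥ x₂),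
    dotProduct_comm (S₁ *ᵥ x₁), hS₁.dotProduct_mulVec_comm x₂ x₁]

lemma mem_coneBetween_iff {n : ℕ} {S₁ S₂ : Matrix (Fin n) (Fin n) ℝ} (hS₁ : S₁.IsSymm)
    {v : (Fin n → ℝ) × (Fin n → ℝ)} :
    v ∈ coneBetween S₁ S₂ ↔ ∃ A : Matrix (Fin n) (Fin n) ℝ,
      A.PosSemidef ∧ (S₂ - S₁ - A).PosSemidef ∧ A *ᵥ v.1 = v.2 - S₁ *ᵥ v.1 := by
  constructor
  · rintro ⟨S, -, hS₁S, hSS₂, hv⟩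
    refine ⟨S - S₁, hS₁S, by rwa [sub_sub_sub_cancel_right], ?_⟩
    rw [hv, sub_mulVec]
  · rintro ⟨A, hA, hAS₂, hv⟩
    refine ⟨S₁ + A, hS₁.add hA.isSymm, by rwa [add_sub_cancel_left],
      by rwa [sub_add_eq_sub_sub], ?_⟩
    rw [add_mulVec, hv, add_sub_cancel]

theorem stmt8_general (n : ℕ) (S₁ S₂ : Matrix (Fin n) (Fin n) ℝ)
    (hS₁ : S₁.IsSymm) (hU : (S₂ - S₁).PosDef) :
    coneBetween S₁ S₂ =
      {v : (Fin n → ℝ) × (Fin n → ℝ) | ∃ x₁ x₂ : Fin n → ℝ,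
        v = (x₁, S₁ *ᵥ x₁) + (x₂, S₂ *ᵥ x₂) ∧
        0 ≤ omegaForm (x₁, S₁ *ᵥ x₁) (x₂, S₂ *ᵥ x₂)} := by
  ext ⟨h, y⟩
  simp only [mem_coneBetween_iff hS₁, Set.mem_ofPred_eq, omegaForm_graph hS₁, Prod.mk_add_mk,
    Prod.mk.injEq]
  constructor
  · rintro ⟨A, hA, hUA, hAh⟩
    set x₂ := (S₂ - S₁)⁻¹ *ᵥ (y - S₁ *ᵥ h)
    have hx₂ : (S₂ - S₁) *ᵥ x₂ = y - S₁ *ᵥ h := by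
      rw [mulVec_mulVec, mul_nonsing_inv _ hU.det_pos.ne'.isUnit, one_mulVec]
    refine ⟨h - x₂, x₂, ⟨(sub_add_cancel h x₂).symm, ?_⟩, ?_⟩
    · rw [sub_mulVec] at hx₂
      rw [mulVec_sub]
      linear_combination -hx₂
    · exact dotProduct_mulVec_nonneg_of_mulVec_add_eq hA hUA (by rw [sub_add_cancel, hAh, hx₂])
  · rintro ⟨x₁, x₂, ⟨rfl, rfl⟩, hω⟩
    obtain ⟨A, hA, hUA, hAx⟩ := exists_posSemidef_mulVec_add_eq hU.posSemidef hω
    refine ⟨A, hA, hUA, ?_⟩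
    rw [hAx, sub_mulVec, mulVec_add]
    abel

theorem stmt8 (n : ℕ) (S₁ S₂ : Matrix (Fin n) (Fin n) ℝ)
    (hS₁ : S₁.IsSymm) (hS₂ : S₂.IsSymm) (hU : (S₂ - S₁).PosDef) :
    coneBetween S₁ S₂ =
      {v : (Fin n → ℝ) × (Fin n → ℝ) | ∃ x₁ x₂ : Fin n → ℝ,
        v = (x₁, S₁ *ᵥ x₁) + (x₂, S₂ *ᵥ x₂) ∧
        0 ≤ omegaForm (x₁, S₁ *ᵥ x₁) (x₂, S₂ *ᵥ x₂)} :=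
  stmt8_general n S₁ S₂ hS₁ hU
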